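/- The group of 4×4 rational orthogonal matrices all of whose entries are half-integers has exactly 1152 elements: Nat.card {A : Matrix (Fin 4) (Fin 4) ℚ // Aᵀ * A = 1 ∧ ∀ i j, ∃ n : ℤ, A i j = n/2} = 1152 (that is, |O(4; ℤ[1/2])| = 2^7 · 3^2). -/
import Mathlib
set_option maxRecDepth 100000
set_option maxHeartbeats 4000000
open Matrix Finset

def cols : Fin 24 → Fin 4 → ℤ := ![
 ![2,0,0,0], ![-2,0,0,0], ![0,2,0,0], ![0,-2,0,0], ![0,0,2,0], ![0,0,-2,0], ![0,0,0,2], ![0,0,0,-2],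
 ![1,1,1,1], ![1,1,1,-1], ![1,1,-1,1], ![1,1,-1,-1], ![1,-1,1,1], ![1,-1,1,-1], ![1,-1,-1,1], ![1,-1,-1,-1],
 ![-1,1,1,1], ![-1,1,1,-1], ![-1,1,-1,1], ![-1,1,-1,-1], ![-1,-1,1,1], ![-1,-1,1,-1], ![-1,-1,-1,1], ![-1,-1,-1,-1]]

def mask : Fin 24 → Nat := ![252, 252, 243, 243, 207, 207, 63, 63, 1468416, 2724864, 4821504, 8806656, 6391296, 9586944, 9709824, 6821376, 6821376, 9709824, 9586944, 6391296, 8806656, 4821504, 2724864, 1468416]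

def orth (a b : Fin 24) : Bool := (mask a).testBit b.val

def dot (a b : Fin 24) : ℤ := ∑ k, cols a k * cols b k

lemma orth_iff : ∀ a b, orth a b = true ↔ dot a b = 0 := by decide

lemma cols_norm : ∀ a, dot a a = 4 := by decide

lemma cols_inj : ∀ a b : Fin 24, (∀ k, cols a k = cols b k) → a = b := by decide

lemma exists_col_aux : ∀ w : Fin 4 → Fin 5,
    (∑ k, ((w k : ℤ) - 2) * ((w k : ℤ) - 2)) = 4 → ∃ a, ∀ k, cols a k = (w k : ℤ) - 2 := by
  decide

def T2 : Finset (Fin 24 × Fin 24) := (univ ×ˢ univ).filter fun p => orth p.1 p.2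

def T3 : Finset ((Fin 24 × Fin 24) × Fin 24) :=
  (T2 ×ˢ univ).filter fun p => orth p.1.1 p.2 ∧ orth p.1.2 p.2

def T4 : Finset (((Fin 24 × Fin 24) × Fin 24) × Fin 24) :=
  (T3 ×ˢ univ).filter fun p => orth p.1.1.1 p.2 ∧ orth p.1.1.2 p.2 ∧ orth p.1.2 p.2

lemma cardT4 : T4.card = 1152 := by decide

def tup (p : ((Fin 24 × Fin 24) × Fin 24) × Fin 24) : Fin 4 → Fin 24 :=
  ![p.1.1.1, p.1.1.2, p.1.2, p.2]

lemma dot_comm (a b : Fin 24) : dot a b = dot b a := by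
  simp [dot, mul_comm]

lemma mem_T4_iff (p : ((Fin 24 × Fin 24) × Fin 24) × Fin 24) : p ∈ T4 ↔
    (orth p.1.1.1 p.1.1.2 ∧ orth p.1.1.1 p.1.2 ∧ orth p.1.1.2 p.1.2 ∧
     orth p.1.1.1 p.2 ∧ orth p.1.1.2 p.2 ∧ orth p.1.2 p.2) := by
  simp [T4, T3, T2, Finset.mem_filter, Finset.mem_product, and_assoc]

lemma dot_tup {p : ((Fin 24 × Fin 24) × Fin 24) × Fin 24} (hp : p ∈ T4) {i j : Fin 4}
    (hij : i ≠ j) : dot (tup p i) (tup p j) = 0 := by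
  obtain ⟨h12, h13, h23, h14, h24, h34⟩ := (mem_T4_iff p).mp hp
  rw [orth_iff] at h12 h13 h23 h14 h24 h34
  fin_cases i <;> fin_cases j <;>
    simp only [tup, Fin.isValue, Matrix.cons_val_zero, Matrix.cons_val_one, Matrix.head_cons,
      Matrix.cons_val_two, Matrix.tail_cons, Matrix.cons_val_three] <;>
    first
    | exact absurd rfl hij
    | assumption
    | (rw [dot_comm]; assumption)

lemma mem_T4 {p : ((Fin 24 × Fin 24) × Fin 24) × Fin 24}
    (h : ∀ i j : Fin 4, i ≠ j → dot (tup p i) (tup p j) = 0) : p ∈ T4 := by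
  have ht : ∀ m : Fin 4, ∀ q : ((Fin 24 × Fin 24) × Fin 24) × Fin 24, True := fun _ _ => trivial
  rw [mem_T4_iff]
  have h' : ∀ i j : Fin 4, i ≠ j → orth (tup p i) (tup p j) = true := by
    intro i j hij
    rw [orth_iff]
    exact h i j hij
  refine ⟨h' 0 1 (by decide), h' 0 2 (by decide), h' 1 2 (by decide),
    h' 0 3 (by decide), h' 1 3 (by decide), h' 2 3 (by decide)⟩

/-- The group `O(4;ℤ[1/2])` of 4×4 rational orthogonal matrices all of whose entries are
half-integers has exactly `2^7 · 3^2 = 1152` elements. -/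
theorem card_half_integer_orthogonal_group_four :
    Nat.card {A : Matrix (Fin 4) (Fin 4) ℚ //
      Aᵀ * A = 1 ∧ ∀ i j, ∃ n : ℤ, A i j = (n : ℚ) / 2} = 1152 := by
  classical
  set X := {A : Matrix (Fin 4) (Fin 4) ℚ //
      Aᵀ * A = 1 ∧ ∀ i j, ∃ n : ℤ, A i j = (n : ℚ) / 2} with hX
  -- the map from T4 to X
  set mat : (((Fin 24 × Fin 24) × Fin 24) × Fin 24) → Matrix (Fin 4) (Fin 4) ℚ :=
    fun p => Matrix.of fun i j => ((cols (tup p j) i : ℚ) / 2) with hmat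
  have key : ∀ p : ((Fin 24 × Fin 24) × Fin 24) × Fin 24, p ∈ T4 →
      (mat p)ᵀ * (mat p) = 1 := by
    intro p hp
    ext i j
    rw [Matrix.mul_apply, Matrix.one_apply]
    simp only [Matrix.transpose_apply, hmat, Matrix.of_apply]
    have key2 : (∑ k, ((cols (tup p i) k : ℚ) / 2) * ((cols (tup p j) k : ℚ) / 2))
        = (dot (tup p i) (tup p j) : ℚ) / 4 := by
      rw [dot]
      push_cast
      rw [Finset.sum_div]
      exact Finset.sum_congr rfl fun k _ => by ring
    rw [key2]
    by_cases hij : i = j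
    · subst hij
      rw [cols_norm, if_pos rfl]
      norm_num
    · rw [dot_tup hp hij, if_neg hij]
      norm_num
  let f : {p // p ∈ T4} → X := fun p =>
    ⟨mat p.1, key p.1 p.2, fun i j => ⟨cols (tup p.1 j) i, rfl⟩⟩
  have hf : Function.Bijective f := by
    constructor
    · rintro ⟨⟨⟨⟨a1, a2⟩, a3⟩, a4⟩, hp⟩ ⟨⟨⟨⟨b1, b2⟩, b3⟩, b4⟩, hq⟩ h
      have h' : ∀ j i : Fin 4,
          ((cols (tup (((a1, a2), a3), a4) j) i : ℚ) / 2) =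
          ((cols (tup (((b1, b2), b3), b4) j) i : ℚ) / 2) := by
        intro j i
        exact congrFun (congrFun (congrArg Subtype.val h) i) j
      have h'' : ∀ j : Fin 4, tup (((a1, a2), a3), a4) j = tup (((b1, b2), b3), b4) j := by
        intro j
        apply cols_inj
        intro k
        have := h' j k
        field_simp at this
        exact_mod_cast this
      have e1 := h'' 0
      have e2 := h'' 1
      have e3 := h'' 2
      have e4 := h'' 3
      simp only [tup, Matrix.cons_val_zero, Matrix.cons_val_one, Matrix.head_cons,
        Matrix.cons_val_two, Matrix.tail_cons, Matrix.cons_val_three] at e1 e2 e3 e4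
      subst e1; subst e2; subst e3; subst e4
      rfl
    · rintro ⟨A, hA, hh⟩
      set B : Fin 4 → Fin 4 → ℤ := fun i j => (hh i j).choose with hBdef
      have hB : ∀ i j, A i j = (B i j : ℚ) / 2 := fun i j => (hh i j).choose_spec
      have hsum : ∀ i j, ((∑ k, B k i * B k j : ℤ) : ℚ) = if i = j then 4 else 0 := by
        intro i j
        have h1 := congrFun (congrFun hA i) j
        rw [Matrix.mul_apply] at h1
        simp only [Matrix.transpose_apply, Matrix.one_apply] at h1
        push_cast
        have e : ∀ k : Fin 4, (B k i : ℚ) * (B k j : ℚ) = 4 * (A k i * A k j) := by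
          intro k; rw [hB k i, hB k j]; ring
        rw [Finset.sum_congr rfl fun k _ => e k, ← Finset.mul_sum, h1]
        split <;> norm_num
      have hsZ : ∀ i j, (∑ k, B k i * B k j : ℤ) = if i = j then 4 else 0 := by
        intro i j
        have := hsum i j
        by_cases hij : i = j
        · rw [if_pos hij] at this ⊢; exact_mod_cast this
        · rw [if_neg hij] at this ⊢; exact_mod_cast this
      have hcol : ∀ j, ∃ a, ∀ k, cols a k = B k j := by
        intro j
        have hnorm : (∑ k, B k j * B k j : ℤ) = 4 := by simpa using hsZ j j
        have hbound : ∀ k, -2 ≤ B k j ∧ B k j ≤ 2 := by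
          intro k
          have h1 : B k j * B k j ≤ ∑ k', B k' j * B k' j :=
            Finset.single_le_sum (f := fun k' => B k' j * B k' j)
              (fun k' _ => mul_self_nonneg _) (Finset.mem_univ k)
          rw [hnorm] at h1
          constructor <;> nlinarith
        set w : Fin 4 → Fin 5 := fun k => ⟨(B k j + 2).toNat, by
          have := hbound k; omega⟩ with hw
        have hwv : ∀ k, ((w k : ℤ)) - 2 = B k j := by
          intro k
          have := hbound k
          show (((B k j + 2).toNat : ℕ) : ℤ) - 2 = B k j
          omega
        obtain ⟨a, ha⟩ := exists_col_aux w (by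
          rw [Finset.sum_congr rfl fun k _ => by rw [hwv k]]
          exact hnorm)
        exact ⟨a, fun k => by rw [ha k, hwv k]⟩
      choose c hc using hcol
      refine ⟨⟨(((c 0, c 1), c 2), c 3), ?_⟩, ?_⟩
      · apply mem_T4
        intro i j hij
        have ht : ∀ m : Fin 4, tup (((c 0, c 1), c 2), c 3) m = c m := by
          intro m
          fin_cases m <;> rfl
        rw [ht, ht, dot]
        rw [Finset.sum_congr rfl fun k _ => by rw [hc i k, hc j k]]
        rw [hsZ i j, if_neg hij]
      · apply Subtype.ext
        funext i j
        show ((cols (tup (((c 0, c 1), c 2), c 3) j) i : ℚ) / 2) = A i j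
        have ht : tup (((c 0, c 1), c 2), c 3) j = c j := by fin_cases j <;> rfl
        rw [ht, hc j i, hB i j]
  rw [← Nat.card_eq_of_bijective f hf, Nat.card_eq_finsetCard, cardT4]
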